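/- Let m ≥ 1 and n ≥ 1 be integers. Consider the four weight types A = (1,0), B = (0,1), C = (−1,0), E = (0,−1) in ℤ² with multiplicities μ(A) = m+1, μ(B) = n+1, μ(C) = m+1, μ(E) = n+1. For a subset T of {A,B,C,E}, say that (c₁,c₂) ∈ ℤ² admits a T-representation if there exist integers a, b, e, g such that (c₁,c₂) = a·(1,0) + b·(0,1) + e·(−1,0) + g·(0,−1), where the coefficient of each weight type in T is ≥ 0 and the coefficient of each weight type not in T is ≤ −μ(that type). Then (c₁,c₂) admits a T-representation for at least one T among {C,E}, {E}, {A,E}, {A}, {A,B}, {B}, {B,C}, {C} if and only if it is NOT the case that |c₁| ≤ m and |c₂| ≤ n. -/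
import Mathlib


/-- `(c₁,c₂)` admits a `T`-representation in the weight types
A = (1,0), B = (0,1), C = (−1,0), E = (0,−1) (indexed by 0,1,2,3) with
multiplicities m+1, n+1, m+1, n+1. -/
def TRep15 (m n : ℕ) (T : Finset (Fin 4)) (c₁ c₂ : ℤ) : Prop :=
  ∃ a b e g : ℤ,
    (c₁, c₂) = a • ((1 : ℤ), (0 : ℤ)) + b • ((0 : ℤ), (1 : ℤ)) +
      e • ((-1 : ℤ), (0 : ℤ)) + g • ((0 : ℤ), (-1 : ℤ)) ∧
    (if (0 : Fin 4) ∈ T then 0 ≤ a else a ≤ -((m : ℤ) + 1)) ∧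
    (if (1 : Fin 4) ∈ T then 0 ≤ b else b ≤ -((n : ℤ) + 1)) ∧
    (if (2 : Fin 4) ∈ T then 0 ≤ e else e ≤ -((m : ℤ) + 1)) ∧
    (if (3 : Fin 4) ∈ T then 0 ≤ g else g ≤ -((n : ℤ) + 1))

/-- Type (IV) non-MCM region: `(c₁,c₂)` admits a `T`-representation for one of
the subsets {C,E}, {E}, {A,E}, {A}, {A,B}, {B}, {B,C}, {C} iff `(c₁,c₂)` lies
outside the rectangle |c₁| ≤ m, |c₂| ≤ n. -/
theorem stmt_15 (m n : ℕ) (hm : 1 ≤ m) (hn : 1 ≤ n) (c₁ c₂ : ℤ) :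
    (TRep15 m n {2, 3} c₁ c₂ ∨ TRep15 m n {3} c₁ c₂ ∨
      TRep15 m n {0, 3} c₁ c₂ ∨ TRep15 m n {0} c₁ c₂ ∨
      TRep15 m n {0, 1} c₁ c₂ ∨ TRep15 m n {1} c₁ c₂ ∨
      TRep15 m n {1, 2} c₁ c₂ ∨ TRep15 m n {2} c₁ c₂) ↔
    ¬(|c₁| ≤ (m : ℤ) ∧ |c₂| ≤ (n : ℤ)) := by
  rw [not_and_or, not_le, not_le, lt_abs, lt_abs]
  constructor
  · rintro (h|h|h|h|h|h|h|h) <;>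
    · obtain ⟨a,b,e,g,heq,h0,h1,h2,h3⟩ := h
      simp only [Prod.smul_mk, smul_eq_mul, Prod.mk_add_mk, Prod.mk.injEq] at heq
      simp (config := { decide := true }) [Finset.mem_insert,
        Finset.mem_singleton] at h0 h1 h2 h3
      omega
  · rintro ((h|h)|(h|h))
    · -- c₁ ≥ m+1 : T = {0}
      refine Or.inr (Or.inr (Or.inr (Or.inl
        ⟨c₁ - (m+1), c₂ - (n+1) - |c₂|, -((m:ℤ)+1), -((n:ℤ)+1) - |c₂|, ?_, ?_, ?_, ?_, ?_⟩))) <;>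
        simp (config := { decide := true }) only [Prod.smul_mk, smul_eq_mul,
          Prod.mk_add_mk, Prod.mk.injEq, Finset.mem_insert, Finset.mem_singleton,
          if_true, if_false] <;>
        rcases abs_cases c₂ with ⟨h2, _⟩ | ⟨h2, _⟩ <;> omega
    · -- c₁ ≤ -(m+1) (m < -c₁) : T = {2}
      refine Or.inr (Or.inr (Or.inr (Or.inr (Or.inr (Or.inr (Or.inr
        ⟨c₁, c₂ - (n+1) - |c₂|, 0, -((n:ℤ)+1) - |c₂|, ?_, ?_, ?_, ?_, ?_⟩)))))) <;>
        simp (config := { decide := true }) only [Prod.smul_mk, smul_eq_mul,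
          Prod.mk_add_mk, Prod.mk.injEq, Finset.mem_insert, Finset.mem_singleton,
          if_true, if_false] <;>
        rcases abs_cases c₂ with ⟨h2, _⟩ | ⟨h2, _⟩ <;> omega
    · -- c₂ ≥ n+1 : T = {1}
      refine Or.inr (Or.inr (Or.inr (Or.inr (Or.inr (Or.inl
        ⟨c₁ - ((m:ℤ)+1) - |c₁|, c₂ - (n+1), -((m:ℤ)+1) - |c₁|, -((n:ℤ)+1), ?_, ?_, ?_, ?_, ?_⟩))))) <;>
        simp (config := { decide := true }) only [Prod.smul_mk, smul_eq_mul,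
          Prod.mk_add_mk, Prod.mk.injEq, Finset.mem_insert, Finset.mem_singleton,
          if_true, if_false] <;>
        rcases abs_cases c₁ with ⟨h1, _⟩ | ⟨h1, _⟩ <;> omega
    · -- c₂ ≤ -(n+1) : T = {3}
      refine Or.inr (Or.inl
        ⟨c₁ - ((m:ℤ)+1) - |c₁|, c₂, -((m:ℤ)+1) - |c₁|, 0, ?_, ?_, ?_, ?_, ?_⟩) <;>
        simp (config := { decide := true }) only [Prod.smul_mk, smul_eq_mul,
          Prod.mk_add_mk, Prod.mk.injEq, Finset.mem_insert, Finset.mem_singleton,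
          if_true, if_false] <;>
        rcases abs_cases c₁ with ⟨h1, _⟩ | ⟨h1, _⟩ <;> omega
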